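/- For Sp(4,ℝ), parametrize K(ℝ) = U(2)-types by pairs of integers (p, q) with p ≥ q, with spin norm defined by ‖(p,q)‖_spin = min over j ∈ {0,1,2,3} of ‖{(p,q) − ρ_n^{(j)}} + ρ_c‖, where ρ_c = (1/2, −1/2), ρ_n^{(0)} = (3/2, 3/2), ρ_n^{(1)} = (3/2, −1/2), ρ_n^{(2)} = (1/2, −3/2), ρ_n^{(3)} = (−3/2, −3/2), and {v} denotes the dominant representative of v under the Weyl group {1, swap} of U(2) (i.e., coordinates sorted decreasingly). Then for every sufficiently large positive integer m, with μ_m = (−m+2, −m): ‖μ_m − (0,−2)‖_spin = √(2m² − 14m + 25) < ‖μ_m‖_spin = √(2m² − 10m + 17) < ‖μ_m − (2,0)‖_spin = √(2m² − 6m + 5). -/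
import Mathlib


/-- Dominant representative for U(2): sort the two coordinates decreasingly. -/
def sp4Dom (v : ℝ × ℝ) : ℝ × ℝ := (max v.1 v.2, min v.1 v.2)

/-- Spin norm of the U(2)-type `(p, q)` for Sp(4,ℝ):
`min over j of ‖{(p,q) − ρ_n^{(j)}} + ρ_c‖` with `ρ_c = (1/2, −1/2)` and
`ρ_n^{(0)} = (3/2,3/2)`, `ρ_n^{(1)} = (3/2,−1/2)`, `ρ_n^{(2)} = (1/2,−3/2)`,
`ρ_n^{(3)} = (−3/2,−3/2)`. -/
noncomputable def sp4SpinNorm (p q : ℝ) : ℝ :=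
  let ρc : ℝ × ℝ := (1/2, -1/2)
  let f : ℝ × ℝ → ℝ := fun ρ =>
    Real.sqrt (((sp4Dom (p - ρ.1, q - ρ.2)).1 + ρc.1)^2
      + ((sp4Dom (p - ρ.1, q - ρ.2)).2 + ρc.2)^2)
  min (min (f (3/2, 3/2)) (f (3/2, -1/2))) (min (f (1/2, -3/2)) (f (-3/2, -3/2)))

lemma dom_eq (a b : ℝ) (h : b ≤ a) : sp4Dom (a, b) = (a, b) := by
  simp [sp4Dom, max_eq_left h, min_eq_right h]

lemma dom_swap (a b : ℝ) (h : a ≤ b) : sp4Dom (a, b) = (b, a) := by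
  simp [sp4Dom, max_eq_right h, min_eq_left h]

lemma min4 (a b c d t : ℝ) (h0 : t ≤ a) (h1 : t ≤ b) (h2 : t ≤ c) (hd : d = t) :
    min (min (Real.sqrt a) (Real.sqrt b)) (min (Real.sqrt c) (Real.sqrt d))
      = Real.sqrt t := by
  subst hd
  rw [min_eq_right (Real.sqrt_le_sqrt h2),
    min_eq_right (le_min (Real.sqrt_le_sqrt h0) (Real.sqrt_le_sqrt h1))]

/-- For `μ_m = (−m+2, −m)` with `m` large (`m ≥ 4`), with `β₁ = (2,0)` and
`β₂ = (0,−2)`: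
`‖μ_m − β₂‖_spin = √(2m²−14m+25) < ‖μ_m‖_spin = √(2m²−10m+17)
  < ‖μ_m − β₁‖_spin = √(2m²−6m+5)`. -/
theorem stmt_10 (m : ℕ) (hm : 4 ≤ m) :
    sp4SpinNorm (-(m : ℝ) + 2 - 0) (-(m : ℝ) - (-2))
        = Real.sqrt (2 * (m : ℝ)^2 - 14 * m + 25) ∧
    sp4SpinNorm (-(m : ℝ) + 2) (-(m : ℝ))
        = Real.sqrt (2 * (m : ℝ)^2 - 10 * m + 17) ∧
    sp4SpinNorm (-(m : ℝ) + 2 - 2) (-(m : ℝ) - 0)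
        = Real.sqrt (2 * (m : ℝ)^2 - 6 * m + 5) ∧
    Real.sqrt (2 * (m : ℝ)^2 - 14 * m + 25)
        < Real.sqrt (2 * (m : ℝ)^2 - 10 * m + 17) ∧
    Real.sqrt (2 * (m : ℝ)^2 - 10 * m + 17)
        < Real.sqrt (2 * (m : ℝ)^2 - 6 * m + 5) := by
  have hm4 : (4:ℝ) ≤ (m:ℝ) := by exact_mod_cast hm
  refine ⟨?_, ?_, ?_, ?_, ?_⟩
  · simp only [sp4SpinNorm]
    rw [dom_eq, dom_swap, dom_swap, dom_eq]
    · apply min4 <;> nlinarith [hm4]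
    all_goals linarith
  · simp only [sp4SpinNorm]
    rw [dom_eq, dom_eq, dom_eq, dom_eq]
    · apply min4 <;> nlinarith [hm4]
    all_goals linarith
  · simp only [sp4SpinNorm]
    rw [dom_eq, dom_swap, dom_swap, dom_eq]
    · apply min4 <;> nlinarith [hm4]
    all_goals linarith
  · exact Real.sqrt_lt_sqrt (by nlinarith) (by nlinarith)
  · exact Real.sqrt_lt_sqrt (by nlinarith) (by nlinarith)
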